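/- Suppose there exist C > 1, γ ∈ [0,1) and a current-mode-independent memory controller Ψ such that ‖φ(k, σ, x₀, Ψ)‖ ≤ C γ^k ‖x₀‖ for all x₀, σ, k, and let V be the associated value function. Let Φ : ℝⁿ → ℝ^m be any map satisfying max_{i ∈ Σ} V(A_i x + B_i Φ(x)) = min_{u ∈ ℝ^m} max_{i ∈ Σ} V(A_i x + B_i u) for all x ∈ ℝⁿ. Then for every x ∈ ℝⁿ and every i ∈ Σ, V(A_i x + B_i Φ(x)) ≤ V(x) − ‖x‖ ≤ (1 − (1−γ)/C) V(x). -/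

import Mathlib

open Matrix Filter ENNReal

noncomputable section

/-- State history `[x(k), …, x(0)]` of the closed loop driven by the reversed
mode list `[i_{k-1}, …, i_0]`, under a current-mode-independent memory controller `Ψ`. -/
def memHist {n m : ℕ} {S : Type*} (A : S → Matrix (Fin n) (Fin n) ℝ)
    (B : S → Matrix (Fin n) (Fin m) ℝ)
    (Ψ : List (EuclideanSpace ℝ (Fin n)) → List S → EuclideanSpace ℝ (Fin m))
    (x0 : EuclideanSpace ℝ (Fin n)) : List S → List (EuclideanSpace ℝ (Fin n))
  | [] => [x0]
  | i :: is =>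
      WithLp.toLp 2 ((A i).mulVec ((memHist A B Ψ x0 is).headD 0) +
        (B i).mulVec (Ψ (memHist A B Ψ x0 is) is)) :: memHist A B Ψ x0 is

/-- Closed-loop solution `φ(k, σ, x0, Ψ)` under the switching signal `σ`:
at each step, `Ψ` receives the current and past states `(x(k), …, x(0))`
and the past modes `(σ(k-1), …, σ(0))`. -/
def memTraj {n m : ℕ} {S : Type*} (A : S → Matrix (Fin n) (Fin n) ℝ)
    (B : S → Matrix (Fin n) (Fin m) ℝ)
    (Ψ : List (EuclideanSpace ℝ (Fin n)) → List S → EuclideanSpace ℝ (Fin m))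
    (x0 : EuclideanSpace ℝ (Fin n)) (σ : ℕ → S) (k : ℕ) : EuclideanSpace ℝ (Fin n) :=
  (memHist A B Ψ x0 (((List.range k).reverse).map σ)).headD 0

/-- The value function `V(x₀) = inf_Ψ sup_σ Σₖ ‖φ(k, σ, x₀, Ψ)‖`
(computed in `ℝ≥0∞` and converted to a real number). -/
def valFun {n m : ℕ} {S : Type*} (A : S → Matrix (Fin n) (Fin n) ℝ)
    (B : S → Matrix (Fin n) (Fin m) ℝ) (x0 : EuclideanSpace ℝ (Fin n)) : ℝ :=
  (⨅ Ψ : List (EuclideanSpace ℝ (Fin n)) → List S → EuclideanSpace ℝ (Fin m),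
    ⨆ σ : ℕ → S, ∑' k : ℕ, (‖memTraj A B Ψ x0 σ k‖₊ : ℝ≥0∞)).toReal

/-!
Bellman's principle of optimality: a controller started at `x` first pays `‖x‖`; whatever the
first mode `i` is, it then continues from `A_i x + B_i u` (with `u` its first input) as a controller
with shifted memory, so `‖x‖ + min_u max_i V(A_i x + B_i u) ≤ V(x)`, and a minimising `Φ` attains
that minimum. The exponentially stabilising `Ψ` gives `V(x) ≤ C/(1-γ) ‖x‖`; this keeps `V`
finite, so that the real-valued min-max agrees with the one in `ℝ≥0∞`, and it is the second
inequality after rearranging.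
-/

section ClosedLoop

variable {n m : ℕ} {S : Type*} (A : S → Matrix (Fin n) (Fin n) ℝ) (B : S → Matrix (Fin n) (Fin m) ℝ)

def ctrlStep (i : S) (x : EuclideanSpace ℝ (Fin n)) (u : EuclideanSpace ℝ (Fin m)) :
    EuclideanSpace ℝ (Fin n) :=
  WithLp.toLp 2 ((A i).mulVec x + (B i).mulVec u)

/-- The controller that runs `Ψ` from the second step on, after the state `x` and mode `i`. -/
def shiftCtrl (Ψ : List (EuclideanSpace ℝ (Fin n)) → List S → EuclideanSpace ℝ (Fin m))
    (x : EuclideanSpace ℝ (Fin n)) (i : S) :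
    List (EuclideanSpace ℝ (Fin n)) → List S → EuclideanSpace ℝ (Fin m) :=
  fun h ms => Ψ (h ++ [x]) (ms ++ [i])

def memCost (Ψ : List (EuclideanSpace ℝ (Fin n)) → List S → EuclideanSpace ℝ (Fin m))
    (x0 : EuclideanSpace ℝ (Fin n)) : ℝ≥0∞ :=
  ⨆ σ : ℕ → S, ∑' k : ℕ, (‖memTraj A B Ψ x0 σ k‖₊ : ℝ≥0∞)

def valFunE (x0 : EuclideanSpace ℝ (Fin n)) : ℝ≥0∞ :=
  ⨅ Ψ : List (EuclideanSpace ℝ (Fin n)) → List S → EuclideanSpace ℝ (Fin m), memCost A B Ψ x0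

variable (Ψ : List (EuclideanSpace ℝ (Fin n)) → List S → EuclideanSpace ℝ (Fin m))

lemma memHist_ne_nil (x0 : EuclideanSpace ℝ (Fin n)) (l : List S) : memHist A B Ψ x0 l ≠ [] := by
  cases l <;> simp [memHist]

lemma headD_memHist_append (x0 : EuclideanSpace ℝ (Fin n)) (l : List S)
    (t : List (EuclideanSpace ℝ (Fin n))) (d : EuclideanSpace ℝ (Fin n)) :
    (memHist A B Ψ x0 l ++ t).headD d = (memHist A B Ψ x0 l).headD d := by
  simp [List.head?_append_of_ne_nil _ (memHist_ne_nil A B Ψ x0 l)]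

lemma memHist_append_singleton (x : EuclideanSpace ℝ (Fin n)) (i : S) (l : List S) :
    memHist A B Ψ x (l ++ [i]) =
      memHist A B (shiftCtrl Ψ x i) (ctrlStep A B i x (Ψ [x] [])) l ++ [x] := by
  induction l with
  | nil => rfl
  | cons j l ih =>
    simp only [List.cons_append, memHist, ih, headD_memHist_append]
    rfl

lemma memTraj_zero (x0 : EuclideanSpace ℝ (Fin n)) (σ : ℕ → S) : memTraj A B Ψ x0 σ 0 = x0 := rfl

lemma memTraj_succ (x : EuclideanSpace ℝ (Fin n)) (σ : ℕ → S) (k : ℕ) :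
    memTraj A B Ψ x σ (k + 1) =
      memTraj A B (shiftCtrl Ψ x (σ 0)) (ctrlStep A B (σ 0) x (Ψ [x] []))
        (fun k => σ (k + 1)) k := by
  have hmodes : (List.range (k + 1)).reverse.map σ
      = (List.range k).reverse.map (fun k => σ (k + 1)) ++ [σ 0] := by
    simp [List.range_succ_eq_map, List.map_reverse, Function.comp_def]
  rw [memTraj, hmodes, memHist_append_singleton, headD_memHist_append]
  rfl

lemma nnnorm_add_memCost_shiftCtrl_le (x : EuclideanSpace ℝ (Fin n)) (i : S) :
    (‖x‖₊ : ℝ≥0∞) + memCost A B (shiftCtrl Ψ x i) (ctrlStep A B i x (Ψ [x] [])) ≤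
      memCost A B Ψ x := by
  have : Nonempty (ℕ → S) := ⟨fun _ => i⟩
  rw [memCost, ENNReal.add_iSup]
  refine iSup_le fun τ => le_iSup_of_le (fun k => Nat.casesOn k i τ) (le_of_eq ?_)
  rw [eq_comm, tsum_eq_zero_add' ENNReal.summable, memTraj_zero]
  exact congrArg _ (tsum_congr fun k => by rw [memTraj_succ]; rfl)

lemma nnnorm_add_iInf_iSup_valFunE_le [Nonempty S] (x : EuclideanSpace ℝ (Fin n)) :
    (‖x‖₊ : ℝ≥0∞) + ⨅ u, ⨆ i, valFunE A B (ctrlStep A B i x u) ≤ valFunE A B x := by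
  refine le_iInf fun Ψ => ?_
  calc (‖x‖₊ : ℝ≥0∞) + ⨅ u, ⨆ i, valFunE A B (ctrlStep A B i x u)
      ≤ ‖x‖₊ + ⨆ i, valFunE A B (ctrlStep A B i x (Ψ [x] [])) := by gcongr; exact iInf_le _ _
    _ = ⨆ i, ((‖x‖₊ : ℝ≥0∞) + valFunE A B (ctrlStep A B i x (Ψ [x] []))) := ENNReal.add_iSup _
    _ ≤ memCost A B Ψ x := iSup_le fun i =>
      (add_le_add_right (iInf_le _ (shiftCtrl Ψ x i)) _).trans
        (nnnorm_add_memCost_shiftCtrl_le A B Ψ x i)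

lemma norm_add_iInf_iSup_valFun_le [Finite S] [Nonempty S] (hfin : ∀ y, valFunE A B y ≠ ⊤)
    (x : EuclideanSpace ℝ (Fin n)) :
    ‖x‖ + ⨅ u, ⨆ i, valFun A B (ctrlStep A B i x u) ≤ valFun A B x := by
  have h := nnnorm_add_iInf_iSup_valFunE_le A B x
  have hinf_ne_top := ne_top_of_le_ne_top (hfin x) (le_add_self.trans h)
  have hinf_toReal : (⨅ u, ⨆ i, valFunE A B (ctrlStep A B i x u)).toReal =
      ⨅ u, ⨆ i, valFun A B (ctrlStep A B i x u) := by
    rw [ENNReal.toReal_iInf fun u => iSup_ne_top fun i => hfin _]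
    exact iInf_congr fun u => ENNReal.toReal_iSup fun i => hfin _
  have h' := ENNReal.toReal_mono (hfin x) h
  rwa [ENNReal.toReal_add ENNReal.coe_ne_top hinf_ne_top, hinf_toReal, coe_toReal, coe_nnnorm] at h'

lemma memCost_le_of_norm_memTraj_le {C γ : ℝ} (hC : 0 ≤ C) (hγ0 : 0 ≤ γ) (hγ1 : γ < 1)
    (x : EuclideanSpace ℝ (Fin n)) (hx : ∀ σ k, ‖memTraj A B Ψ x σ k‖ ≤ C * γ ^ k * ‖x‖) :
    memCost A B Ψ x ≤ ENNReal.ofReal (C / (1 - γ) * ‖x‖) := by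
  have hsum : HasSum (fun k => C * γ ^ k * ‖x‖) (C / (1 - γ) * ‖x‖) := by
    simpa [div_eq_mul_inv, mul_right_comm] using
      ((hasSum_geometric_of_lt_one hγ0 hγ1).mul_left C).mul_right ‖x‖
  refine iSup_le fun σ => ?_
  calc ∑' k, (‖memTraj A B Ψ x σ k‖₊ : ℝ≥0∞)
      ≤ ∑' k, ENNReal.ofReal (C * γ ^ k * ‖x‖) :=
        ENNReal.tsum_le_tsum fun k => by
          rw [← enorm_eq_nnnorm, ← ofReal_norm]; exact ENNReal.ofReal_le_ofReal (hx σ k)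
    _ = ENNReal.ofReal (C / (1 - γ) * ‖x‖) := by
      rw [← ENNReal.ofReal_tsum_of_nonneg (fun k => by positivity) hsum.summable, hsum.tsum_eq]

end ClosedLoop

theorem valFun_decrease_general {n m : ℕ} {S : Type*} [Fintype S] [Nonempty S]
    (A : S → Matrix (Fin n) (Fin n) ℝ) (B : S → Matrix (Fin n) (Fin m) ℝ)
    (C γ : ℝ) (hC : 1 < C) (hγ : γ ∈ Set.Ico (0 : ℝ) 1)
    (Ψ : List (EuclideanSpace ℝ (Fin n)) → List S → EuclideanSpace ℝ (Fin m))
    (hΨ : ∀ (x0 : EuclideanSpace ℝ (Fin n)) (σ : ℕ → S) (k : ℕ),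
      ‖memTraj A B Ψ x0 σ k‖ ≤ C * γ ^ k * ‖x0‖)
    (Φ : EuclideanSpace ℝ (Fin n) → EuclideanSpace ℝ (Fin m))
    (hΦ : ∀ x : EuclideanSpace ℝ (Fin n),
      (⨆ i : S, valFun A B (WithLp.toLp 2 ((A i).mulVec x + (B i).mulVec (Φ x)))) =
      ⨅ u : EuclideanSpace ℝ (Fin m),
        ⨆ i : S, valFun A B (WithLp.toLp 2 ((A i).mulVec x + (B i).mulVec u))) :
    ∀ (x : EuclideanSpace ℝ (Fin n)) (i : S),
      valFun A B (WithLp.toLp 2 ((A i).mulVec x + (B i).mulVec (Φ x))) ≤ valFun A B x - ‖x‖ ∧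
      valFun A B x - ‖x‖ ≤ (1 - (1 - γ) / C) * valFun A B x := by
  obtain ⟨hγ0, hγ1⟩ := hγ
  have hC0 : 0 < C := by linarith
  have hbound (y : EuclideanSpace ℝ (Fin n)) :
      valFunE A B y ≤ ENNReal.ofReal (C / (1 - γ) * ‖y‖) :=
    iInf_le_of_le Ψ (memCost_le_of_norm_memTraj_le A B Ψ hC0.le hγ0 hγ1 y (hΨ y))
  have hfin (y : EuclideanSpace ℝ (Fin n)) : valFunE A B y ≠ ⊤ :=
    ne_top_of_le_ne_top ENNReal.ofReal_ne_top (hbound y)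
  intro x i
  constructor
  · calc valFun A B (ctrlStep A B i x (Φ x))
        ≤ ⨆ j, valFun A B (ctrlStep A B j x (Φ x)) :=
          le_ciSup (f := fun j => valFun A B (ctrlStep A B j x (Φ x)))
            (Set.finite_range _).bddAbove i
      _ = ⨅ u, ⨆ j, valFun A B (ctrlStep A B j x u) := hΦ x
      _ ≤ valFun A B x - ‖x‖ := le_sub_iff_add_le'.mpr (norm_add_iInf_iSup_valFun_le A B hfin x)
  · have hV : valFun A B x ≤ C / (1 - γ) * ‖x‖ := ENNReal.toReal_le_of_le_ofReal
      (mul_nonneg (div_nonneg hC0.le (sub_nonneg.2 hγ1.le)) (norm_nonneg x)) (hbound x)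
    have hγC : 0 ≤ (1 - γ) / C := div_nonneg (sub_nonneg.2 hγ1.le) hC0.le
    have : (1 - γ) / C * valFun A B x ≤ ‖x‖ :=
      calc (1 - γ) / C * valFun A B x ≤ (1 - γ) / C * (C / (1 - γ) * ‖x‖) := by gcongr
        _ = ‖x‖ := by field_simp [(sub_pos.2 hγ1).ne']
    linarith

/-- Any minimizing feedback `Φ` for the value function yields the
strict Lyapunov decrease `V(A_i x + B_i Φ(x)) ≤ V(x) - ‖x‖ ≤ (1 - (1-γ)/C) V(x)`. -/
theorem valFun_decrease {n m : ℕ} (hn : 0 < n) (hm : 0 < m) {S : Type*} [Fintype S] [Nonempty S]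
    (A : S → Matrix (Fin n) (Fin n) ℝ) (B : S → Matrix (Fin n) (Fin m) ℝ)
    (C γ : ℝ) (hC : 1 < C) (hγ : γ ∈ Set.Ico (0 : ℝ) 1)
    (Ψ : List (EuclideanSpace ℝ (Fin n)) → List S → EuclideanSpace ℝ (Fin m))
    (hΨ : ∀ (x0 : EuclideanSpace ℝ (Fin n)) (σ : ℕ → S) (k : ℕ),
      ‖memTraj A B Ψ x0 σ k‖ ≤ C * γ ^ k * ‖x0‖)
    (Φ : EuclideanSpace ℝ (Fin n) → EuclideanSpace ℝ (Fin m))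
    (hΦ : ∀ x : EuclideanSpace ℝ (Fin n),
      (⨆ i : S, valFun A B (WithLp.toLp 2 ((A i).mulVec x + (B i).mulVec (Φ x)))) =
      ⨅ u : EuclideanSpace ℝ (Fin m),
        ⨆ i : S, valFun A B (WithLp.toLp 2 ((A i).mulVec x + (B i).mulVec u))) :
    ∀ (x : EuclideanSpace ℝ (Fin n)) (i : S),
      valFun A B (WithLp.toLp 2 ((A i).mulVec x + (B i).mulVec (Φ x))) ≤ valFun A B x - ‖x‖ ∧
      valFun A B x - ‖x‖ ≤ (1 - (1 - γ) / C) * valFun A B x :=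
  valFun_decrease_general A B C γ hC hγ Ψ hΨ Φ hΦ
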